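/- Assume that for some (equivalently, by W-equivariance, for every) basis Δ of Φ the highest weights λ₀^ρ(Δ) and λ₀^σ(Δ) lie in the same face of the decomposition of A* determined by the hyperplanes H_a = {z ∈ A* : (a, z) = 0}, a ∈ Φ; equivalently, for every a ∈ Δ one has (λ₀^ρ(Δ), a) > 0 iff (λ₀^σ(Δ), a) > 0. Then for all bases Δ, Δ' of Φ and all subsets Y ⊆ Δ, Y' ⊆ Δ' which are admissible (the notions of admissibility for ρ and σ coincide under this hypothesis), one has F_Y^Δ(ρ) = F_{Y'}^{Δ'}(ρ) if and only if F_Y^Δ(σ) = F_{Y'}^{Δ'}(σ). -/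

import Mathlib

/-!
Common setup for Werner, "Compactifications of Bruhat-Tits buildings associated to
linear representations":  a finite-dimensional real vector space `A` (the apartment),
a root system `Φ` in the dual space together with a Weyl-group invariant inner
product, a finite Weyl-invariant set `Λ` of (K-)weights, and for every basis `Δ`
of `Φ` a highest weight `lam0 Δ ∈ Λ`.
-/

open Pointwise Filter Topology Bornology
open scoped Classical

noncomputable section

/-- A set `M` of linear forms is *connected* if the graph with vertex set `M` and an
edge between `m` and `n` iff `inn m n ≠ 0` is connected. -/
def GraphConnected {D : Type*} (inn : D → D → ℝ) (M : Set D) : Prop :=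
  ∀ m ∈ M, ∀ n ∈ M,
    Relation.ReflTransGen (fun x y => x ∈ M ∧ y ∈ M ∧ inn x y ≠ 0) m n

/-- The coefficients of `μ` as a linear combination of the elements of `Δ` (chosen
arbitrarily if one exists; it is unique when `Δ` is linearly independent). -/
noncomputable def coeffs {A : Type*} [AddCommGroup A] [Module ℝ A]
    (Δ : Finset (Module.Dual ℝ A)) (μ : Module.Dual ℝ A) : Module.Dual ℝ A → ℝ :=
  if h : ∃ n : Module.Dual ℝ A → ℝ, μ = ∑ b ∈ Δ, n b • b then h.choose else fun _ => 0

/-- The support `[μ]` of `μ` with respect to the basis `Δ`: the set of elements of `Δ`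
whose coefficient in `μ` is nonzero. -/
noncomputable def supp {A : Type*} [AddCommGroup A] [Module ℝ A]
    (Δ : Finset (Module.Dual ℝ A)) (μ : Module.Dual ℝ A) : Finset (Module.Dual ℝ A) :=
  Δ.filter fun a => coeffs Δ μ a ≠ 0

/-- Raw data: a finite set `Φ` of roots in the dual of `A`, a product `inn` on the dual,
a finite set `Λ` of weights, and a highest weight `lam0 Δ` for every basis `Δ`. -/
structure RootWeightData (A : Type*) [NormedAddCommGroup A] [NormedSpace ℝ A]
    [FiniteDimensional ℝ A] where
  Φ : Finset (Module.Dual ℝ A)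
  inn : Module.Dual ℝ A → Module.Dual ℝ A → ℝ
  Λ : Finset (Module.Dual ℝ A)
  lam0 : Finset (Module.Dual ℝ A) → Module.Dual ℝ A

namespace RootWeightData

variable {A : Type*} [NormedAddCommGroup A] [NormedSpace ℝ A] [FiniteDimensional ℝ A]
variable (S : RootWeightData A)

/-- The reflection associated to the root `a`. -/
def refl (a : Module.Dual ℝ A) : Function.End (Module.Dual ℝ A) :=
  fun x => x - (2 * S.inn x a / S.inn a a) • a

/-- The Weyl group `W`, generated by the reflections in the roots. -/
def weyl : Submonoid (Function.End (Module.Dual ℝ A)) :=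
  Submonoid.closure {f | ∃ a ∈ S.Φ, f = S.refl a}

/-- `Δ` is a basis of the root system `Φ`: a linearly independent subset of `Φ` such
that every root is a nonnegative or nonpositive linear combination of `Δ`. -/
def IsBase (Δ : Finset (Module.Dual ℝ A)) : Prop :=
  (↑Δ : Set (Module.Dual ℝ A)) ⊆ (S.Φ : Set (Module.Dual ℝ A)) ∧
  LinearIndependent ℝ (fun a : (Δ : Set (Module.Dual ℝ A)) => (a : Module.Dual ℝ A)) ∧
  ∀ a ∈ S.Φ,
    (∃ n : Module.Dual ℝ A → ℝ, (∀ b ∈ Δ, 0 ≤ n b) ∧ a = ∑ b ∈ Δ, n b • b) ∨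
    (∃ n : Module.Dual ℝ A → ℝ, (∀ b ∈ Δ, 0 ≤ n b) ∧ a = -∑ b ∈ Δ, n b • b)

/-- `Y` is an admissible subset of the basis `Δ`: `Y ⊆ Δ` and `Y ∪ {λ₀(Δ)}` is
connected. -/
def Admissible (Δ Y : Finset (Module.Dual ℝ A)) : Prop :=
  Y ⊆ Δ ∧ GraphConnected S.inn ((↑Y : Set (Module.Dual ℝ A)) ∪ {S.lam0 Δ})

end RootWeightData

/-- The whole setting of Werner's paper: the data of `RootWeightData`, where `Φ` is a
(crystallographic, possibly non-reduced) root system spanning the dual of `A`, `inn` is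
a Weyl-invariant inner product, `Λ` is a finite Weyl-invariant set of weights, and
`lam0` picks, Weyl-equivariantly, a highest weight for each basis, dominating all of
`Λ`; moreover a subset of a basis is admissible iff it is the support of
`λ₀(Δ) - λ` for some weight `λ`. -/
structure RootWeightSystem (A : Type*) [NormedAddCommGroup A] [NormedSpace ℝ A]
    [FiniteDimensional ℝ A] extends RootWeightData A where
  inn_symm : ∀ x y, inn x y = inn y x
  inn_add_left : ∀ x y z, inn (x + y) z = inn x z + inn y z
  inn_smul_left : ∀ (c : ℝ) (x y), inn (c • x) y = c * inn x y
  inn_pos : ∀ x, x ≠ 0 → 0 < inn x x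
  root_ne_zero : ∀ a ∈ Φ, a ≠ (0 : Module.Dual ℝ A)
  neg_mem : ∀ a ∈ Φ, -a ∈ Φ
  refl_mem : ∀ a ∈ Φ, ∀ b ∈ Φ, toRootWeightData.refl a b ∈ Φ
  inn_weyl_invariant :
    ∀ w ∈ toRootWeightData.weyl, ∀ x y, inn (w x) (w y) = inn x y
  phi_spans : Submodule.span ℝ (Φ : Set (Module.Dual ℝ A)) = ⊤
  exists_base : ∃ Δ, toRootWeightData.IsBase Δ
  base_cover : ∀ x : A, ∃ Δ, toRootWeightData.IsBase Δ ∧ ∀ a ∈ Δ, 0 ≤ a x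
  base_weyl : ∀ w ∈ toRootWeightData.weyl, ∀ Δ, toRootWeightData.IsBase Δ →
    toRootWeightData.IsBase (Δ.image (w : Module.Dual ℝ A → Module.Dual ℝ A))
  lam0_mem : ∀ Δ, toRootWeightData.IsBase Δ → lam0 Δ ∈ Λ
  lam0_dominates : ∀ Δ, toRootWeightData.IsBase Δ → ∀ l ∈ Λ,
    ∃ n : Module.Dual ℝ A → ℝ, (∀ a ∈ Δ, 0 ≤ n a) ∧ lam0 Δ - l = ∑ a ∈ Δ, n a • a
  weight_weyl_invariant : ∀ w ∈ toRootWeightData.weyl, ∀ l ∈ Λ, w l ∈ Λ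
  lam0_equivariant : ∀ w ∈ toRootWeightData.weyl, ∀ Δ, toRootWeightData.IsBase Δ →
    lam0 (Δ.image (w : Module.Dual ℝ A → Module.Dual ℝ A)) = w (lam0 Δ)
  integrality : ∀ l ∈ Λ, ∀ a ∈ Φ, ∃ k : ℤ, 2 * inn l a / inn a a = (k : ℝ)
  admissible_iff_support : ∀ Δ, toRootWeightData.IsBase Δ → ∀ Y ⊆ Δ,
    (toRootWeightData.Admissible Δ Y ↔ ∃ l ∈ Λ, supp Δ (lam0 Δ - l) = Y)

namespace RootWeightSystem

variable {A : Type*} [NormedAddCommGroup A] [NormedSpace ℝ A] [FiniteDimensional ℝ A]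
variable (S : RootWeightSystem A)

/-- The face `F_Y^Δ` of the apartment `A` associated to a basis `Δ` and an admissible
subset `Y ⊆ Δ`. -/
def Face (Δ Y : Finset (Module.Dual ℝ A)) : Set A :=
  {x | (∀ a ∈ Y, a x = 0) ∧
    ∀ l ∈ S.Λ, ¬ supp Δ (S.lam0 Δ - l) ⊆ Y → 0 < (S.lam0 Δ - l) x}

/-- `F` belongs to the collection `Σ` of faces. -/
def IsFace (F : Set A) : Prop :=
  ∃ Δ Y, S.toRootWeightData.IsBase Δ ∧ S.toRootWeightData.Admissible Δ Y ∧
    F = S.Face Δ Y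

/-- The collection `Σ` of all faces. -/
def Faces : Type _ := {F : Set A // S.IsFace F}

/-- The relation identifying `(F, u)` and `(F, v)` when `u - v ∈ ⟨F⟩`; the quotient is
the disjoint union `Ā = ⊔_{F ∈ Σ} A/⟨F⟩`. -/
def AbarRel (p q : S.Faces × A) : Prop :=
  p.1 = q.1 ∧ p.2 - q.2 ∈ Submodule.span ℝ p.1.val

/-- The compactified apartment `Ā = ⊔_{F ∈ Σ} A_F`, `A_F = A/⟨F⟩`. -/
def Abar : Type _ := Quot S.AbarRel

/-- `r_F(u)`, the image of `u ∈ A` in the stratum `A_F` of `Ā`. -/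
def mkAbar (F : S.Faces) (u : A) : S.Abar := Quot.mk _ (F, u)

/-- The basic set `Γ_F(U) = ⋃_{F' ⊆ cl F} r_{F'}(U + F)` of `Ā`. -/
def Gamma (F : S.Faces) (U : Set A) : Set S.Abar :=
  {p | ∃ F' : S.Faces, F'.val ⊆ closure F.val ∧ ∃ u ∈ U + F.val, p = S.mkAbar F' u}

/-- The topology of `Ā`, generated by the sets `Γ_F(U)` for `F ∈ Σ` and `U ⊆ A`
bounded and open. -/
instance : TopologicalSpace S.Abar :=
  TopologicalSpace.generateFrom
    {V : Set S.Abar | ∃ (F : S.Faces) (U : Set A),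
      IsOpen U ∧ IsBounded U ∧ V = S.Gamma F U}

/-- `f_Ω(a) = inf {t : Ω ⊆ cl_Ā {z ∈ A : a(z) ≥ -t}} ∈ ℝ ∪ {±∞}`, where `A` is embedded
in `Ā` as the stratum of the face `F₀ = {0}`. -/
def fOmega (F₀ : S.Faces) (Ω : Set S.Abar) (a : Module.Dual ℝ A) : EReal :=
  sInf ((fun t : ℝ => (t : EReal)) ''
    {t : ℝ | Ω ⊆ closure (S.mkAbar F₀ '' {z : A | -t ≤ a z})})

end RootWeightSystem

variable {A : Type*} [NormedAddCommGroup A] [NormedSpace ℝ A] [FiniteDimensional ℝ A]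

/-!
In fact `F_Y^Δ(ρ) = F_Y^Δ(σ)` for every base `Δ` and every `Y ⊆ Δ`. By Weyl-equivariance of
`λ₀`, the set of roots orthogonal to `λ₀(Δ)` is transported along walks through simple
reflections, so it is the same for `ρ` and `σ` at every base.

Given `x ∈ F_Y^Δ(ρ)`, walk from `Δ` by reflections `r_b` in simple roots with `b(x) < 0` to a
base `Δₓ` that is nonnegative at `x`. A step changes `λ₀` by a nonnegative multiple of `b`; if
the multiple is nonzero, `λ₀^ρ(Δ) - λ₀^ρ(r_b Δ)` is nonpositive at `x`, so it lies in `⟨Y⟩` and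
hence so does `b`. Thus `λ₀(Δ) - λ₀(Δₓ) ∈ ⟨Y⟩` for both representations. Now let `λ` be a
weight of `σ` with `(λ₀^σ(Δ) - λ)(x) ≤ 0`. The support `Z ⊆ Δₓ` of `λ₀^σ(Δₓ) - λ` vanishes at
`x` and is admissible. Growing `Z` from `λ₀` along its connectivity graph, by reflecting weights
of `ρ`, shows `Z ⊆ ⟨Y⟩`. Hence `[λ₀^σ(Δ) - λ] ⊆ Y`, which is what `x ∈ F_Y^Δ(σ)` demands.
-/

open PointedCone

section ConeHull

variable {V : Type*} [AddCommGroup V] [Module ℝ V] {Δ : Finset V} {x : V}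

lemma mem_hull_finset_iff :
    x ∈ hull ℝ (Δ : Set V) ↔ ∃ n : V → ℝ, (∀ b ∈ Δ, 0 ≤ n b) ∧ x = ∑ b ∈ Δ, n b • b := by
  constructor
  · intro hx
    obtain ⟨f, -, rfl⟩ := Submodule.mem_span_finset.mp hx
    exact ⟨fun b => f b, fun b _ => (f b).2, by simp only [Nonneg.coe_smul]⟩
  · rintro ⟨n, hn, rfl⟩
    refine Submodule.sum_mem _ fun b hb => ?_
    simpa only [Nonneg.mk_smul] using
      Submodule.smul_mem _ (⟨n b, hn b hb⟩ : {c : ℝ // 0 ≤ c}) (subset_hull (R := ℝ) hb)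

lemma nonneg_of_mem_hull (φ : V →ₗ[ℝ] ℝ) (hφ : ∀ b ∈ Δ, 0 ≤ φ b)
    (hx : x ∈ hull ℝ (Δ : Set V)) : 0 ≤ φ x := by
  obtain ⟨n, hn, rfl⟩ := mem_hull_finset_iff.mp hx
  simp only [map_sum, map_smul, smul_eq_mul]
  exact Finset.sum_nonneg fun b hb => mul_nonneg (hn b hb) (hφ b hb)

lemma apply_mem_hull_image (f : V →ₗ[ℝ] V) (hx : x ∈ hull ℝ (Δ : Set V)) :
    f x ∈ hull ℝ ((Δ.image f : Finset V) : Set V) := by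
  have := Submodule.mem_map_of_mem (f := f.restrictScalars {c : ℝ // 0 ≤ c}) hx
  rwa [← Submodule.span_image, LinearMap.coe_restrictScalars, ← Finset.coe_image] at this

lemma LinearIndepOn.exists_dual_apply_eq (hΔ : LinearIndepOn ℝ id (Δ : Set V)) (f : V → ℝ) :
    ∃ φ : Module.Dual ℝ V, ∀ b ∈ Δ, φ b = f b := by
  let B := Module.Basis.extend hΔ
  refine ⟨B.constr ℝ fun i => f i, fun b hb => ?_⟩
  simpa [B, Module.Basis.extend_apply_self] using
    B.constr_basis ℝ (fun i => f i) ⟨b, hΔ.subset_extend _ hb⟩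

lemma LinearIndepOn.exists_coord (hΔ : LinearIndepOn ℝ id (Δ : Set V)) (e : V) :
    ∃ φ : Module.Dual ℝ V, (∀ b ∈ Δ, φ b = if b = e then 1 else 0) ∧
      ∀ x ∈ hull ℝ (Δ : Set V), 0 ≤ φ x := by
  obtain ⟨φ, hφ⟩ := hΔ.exists_dual_apply_eq fun b => if b = e then 1 else 0
  exact ⟨φ, hφ, fun x => nonneg_of_mem_hull φ fun b hb => by rw [hφ b hb]; split_ifs <;> norm_num⟩

lemma coord_sum_smul {φ : Module.Dual ℝ V} {e : V} (hφ : ∀ b ∈ Δ, φ b = if b = e then 1 else 0)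
    (he : e ∈ Δ) (n : V → ℝ) : φ (∑ b ∈ Δ, n b • b) = n e := by
  simp only [map_sum, map_smul, smul_eq_mul]
  rw [Finset.sum_congr rfl fun b hb => by rw [hφ b hb]]
  simp [he]

lemma eq_zero_of_mem_hull_of_neg_mem_hull (hΔ : LinearIndepOn ℝ id (Δ : Set V))
    (hx : x ∈ hull ℝ (Δ : Set V)) (hx' : -x ∈ hull ℝ (Δ : Set V)) : x = 0 := by
  obtain ⟨n, hn, rfl⟩ := mem_hull_finset_iff.mp hx
  refine Finset.sum_eq_zero fun e he => ?_
  obtain ⟨φ, hφ, hφ_nonneg⟩ := hΔ.exists_coord e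
  have := hφ_nonneg _ hx'
  rw [map_neg, coord_sum_smul hφ he] at this
  rw [le_antisymm (by linarith) (hn e he), zero_smul]

lemma exists_eq_smul_of_mem_hull (hΔ : LinearIndepOn ℝ id (Δ : Set V)) {a d : V} {k : ℝ}
    (ha : a ∈ Δ) (hd : d ∈ hull ℝ (Δ : Set V)) (hkd : k • a - d ∈ hull ℝ (Δ : Set V)) :
    ∃ s : ℝ, 0 ≤ s ∧ d = s • a := by
  obtain ⟨n, hn, rfl⟩ := mem_hull_finset_iff.mp hd
  refine ⟨n a, hn a ha, Finset.sum_eq_single_of_mem a ha fun e he hea => ?_⟩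
  obtain ⟨φ, hφ, hφ_nonneg⟩ := hΔ.exists_coord e
  have := hφ_nonneg _ hkd
  rw [map_sub, map_smul, coord_sum_smul hφ he, hφ a ha, if_neg (Ne.symm hea)] at this
  rw [le_antisymm (by simpa using this) (hn e he), zero_smul]

end ConeHull

section Support

variable {E : Type*} [AddCommGroup E] [Module ℝ E] {Δ Y : Finset (Module.Dual ℝ E)}
  {μ : Module.Dual ℝ E}

lemma coeffs_eq_of_eq_sum (hΔ : LinearIndepOn ℝ id (Δ : Set (Module.Dual ℝ E)))
    {n : Module.Dual ℝ E → ℝ} (h : μ = ∑ b ∈ Δ, n b • b) : ∀ b ∈ Δ, coeffs Δ μ b = n b := by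
  have hex : ∃ n : Module.Dual ℝ E → ℝ, μ = ∑ b ∈ Δ, n b • b := ⟨n, h⟩
  have hspec : μ = ∑ b ∈ Δ, coeffs Δ μ b • b := by rw [coeffs, dif_pos hex]; exact hex.choose_spec
  intro e he
  obtain ⟨φ, hφ, -⟩ := hΔ.exists_coord e
  rw [← coord_sum_smul hφ he (coeffs Δ μ), ← coord_sum_smul hφ he n, ← hspec, ← h]

lemma mem_span_of_supp_subset (h : ∃ n : Module.Dual ℝ E → ℝ, μ = ∑ b ∈ Δ, n b • b)
    (hY : supp Δ μ ⊆ Y) : μ ∈ Submodule.span ℝ (Y : Set (Module.Dual ℝ E)) := by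
  have hspec : μ = ∑ b ∈ Δ, coeffs Δ μ b • b := by rw [coeffs, dif_pos h]; exact h.choose_spec
  rw [hspec]
  refine Submodule.sum_mem _ fun b hb => ?_
  by_cases hc : coeffs Δ μ b = 0
  · simp [hc]
  · exact Submodule.smul_mem _ _ (Submodule.subset_span (hY (Finset.mem_filter.mpr ⟨hb, hc⟩)))

lemma supp_subset_of_mem_span (hΔ : LinearIndepOn ℝ id (Δ : Set (Module.Dual ℝ E)))
    (hYΔ : Y ⊆ Δ) (hμ : μ ∈ Submodule.span ℝ (Y : Set (Module.Dual ℝ E))) : supp Δ μ ⊆ Y := by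
  obtain ⟨f, hf, rfl⟩ := Submodule.mem_span_finset.mp hμ
  have hrep : ∑ a ∈ Y, f a • a = ∑ a ∈ Δ, f a • a := Finset.sum_subset hYΔ fun b _ hbY => by
    rw [Function.notMem_support.mp fun h => hbY (hf h), zero_smul]
  intro b hb
  obtain ⟨hbΔ, hb0⟩ := Finset.mem_filter.mp hb
  rw [coeffs_eq_of_eq_sum hΔ hrep b hbΔ] at hb0
  exact hf hb0

lemma eval_eq_zero_of_mem_span {x : E} (hx : ∀ a ∈ Y, a x = 0)
    (hμ : μ ∈ Submodule.span ℝ (Y : Set (Module.Dual ℝ E))) : μ x = 0 := by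
  induction hμ using Submodule.span_induction with
  | mem a ha => exact hx a ha
  | zero => rfl
  | add a b _ _ ha hb => simp [ha, hb]
  | smul c a _ ha => simp [ha]

lemma eval_eq_zero_of_mem_supp (hΔ : LinearIndepOn ℝ id (Δ : Set (Module.Dual ℝ E)))
    {n : Module.Dual ℝ E → ℝ} (hn : ∀ b ∈ Δ, 0 ≤ n b) (h : μ = ∑ b ∈ Δ, n b • b) {x : E}
    (hx : ∀ b ∈ Δ, 0 ≤ b x) (hμx : μ x ≤ 0) : ∀ a ∈ supp Δ μ, a x = 0 := by
  have hterm : ∀ b ∈ Δ, 0 ≤ n b * b x := fun b hb => mul_nonneg (hn b hb) (hx b hb)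
  have hsum : ∑ b ∈ Δ, n b * b x = 0 := by
    refine le_antisymm ?_ (Finset.sum_nonneg hterm)
    simpa [h] using hμx
  intro a ha
  obtain ⟨haΔ, hna⟩ := Finset.mem_filter.mp ha
  rw [coeffs_eq_of_eq_sum hΔ h a haΔ] at hna
  exact (mul_eq_zero.mp ((Finset.sum_eq_zero_iff_of_nonneg hterm).mp hsum a haΔ)).resolve_left hna

lemma exists_eval_eq_one [FiniteDimensional ℝ E]
    (hΔ : LinearIndepOn ℝ id (Δ : Set (Module.Dual ℝ E))) : ∃ u : E, ∀ a ∈ Δ, a u = 1 := by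
  obtain ⟨φ, hφ⟩ := hΔ.exists_dual_apply_eq 1
  exact ⟨(Module.evalEquiv ℝ E).symm φ, fun a ha => by
    rw [Module.apply_evalEquiv_symm_apply, hφ a ha, Pi.one_apply]⟩

end Support

section GraphConnected

variable {V : Type*} {inn : V → V → ℝ}

lemma GraphConnected.exists_edge_of_mem_of_notMem {M C : Set V} (hM : GraphConnected inn M)
    {p m : V} (hpM : p ∈ M) (hpC : p ∈ C) (hmM : m ∈ M) (hmC : m ∉ C) :
    ∃ u ∈ C, ∃ v ∈ M, v ∉ C ∧ inn u v ≠ 0 := by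
  induction hM p hpM m hmM with
  | refl => exact absurd hpC hmC
  | @tail b c _ hbc ih =>
    by_cases hb : b ∈ C
    · exact ⟨b, hb, c, hbc.2.1, hmC, hbc.2.2⟩
    · exact ih hbc.1 hb

theorem GraphConnected.induction_insert {Y : Finset V} {v : V}
    (hconn : GraphConnected inn (↑Y ∪ {v})) (hY : ∀ a ∈ Y, inn a a ≠ 0)
    {P : Finset V → Prop} (h₀ : P ∅)
    (hstep : ∀ B ⊆ Y, ∀ a ∈ Y, a ∉ B → (∃ p ∈ (B : Set V) ∪ {v}, inn p a ≠ 0) → P B →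
      P (insert a B)) : P Y := by
  obtain ⟨B, hB, hmax⟩ :=
    (Y.powerset.filter P).exists_max_image Finset.card ⟨∅, by simp [h₀]⟩
  obtain ⟨hBY, hPB⟩ := Finset.mem_filter.mp hB
  rw [Finset.mem_powerset] at hBY
  by_cases hYB : Y ⊆ B
  · rwa [hYB.antisymm' hBY] at hPB
  obtain ⟨m, hmY, hmB⟩ := Finset.not_subset.mp hYB
  obtain ⟨a, haY, haB, hadj⟩ : ∃ a ∈ Y, a ∉ B ∧ ∃ p ∈ (B : Set V) ∪ {v}, inn p a ≠ 0 := by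
    by_cases hv : v ∈ Y ∧ v ∉ B
    · exact ⟨v, hv.1, hv.2, v, Or.inr rfl, hY v hv.1⟩
    · obtain ⟨u, hu, w, hw, hwC, huw⟩ := hconn.exists_edge_of_mem_of_notMem (C := ↑B ∪ {v})
        (Or.inr rfl) (Or.inr rfl) (Or.inl hmY) fun h => h.elim hmB fun hmv => by
          subst hmv
          exact hv ⟨hmY, hmB⟩
      refine ⟨w, hw.resolve_right fun h => hwC (Or.inr h), fun h => hwC (Or.inl h), u, hu, huw⟩
  have := hmax (insert a B) (Finset.mem_filter.mpr
    ⟨Finset.mem_powerset.mpr (Finset.insert_subset haY hBY), hstep B hBY a haY haB hadj hPB⟩)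
  rw [Finset.card_insert_of_notMem haB] at this
  omega

end GraphConnected

namespace RootWeightData

variable {S T : RootWeightData A} {Δ : Finset (Module.Dual ℝ A)}

lemma IsBase.linearIndepOn (hΔ : S.IsBase Δ) :
    LinearIndepOn ℝ id (Δ : Set (Module.Dual ℝ A)) :=
  hΔ.2.1

lemma IsBase.mem_hull_or_neg_mem_hull (hΔ : S.IsBase Δ) {c : Module.Dual ℝ A} (hc : c ∈ S.Φ) :
    c ∈ hull ℝ (Δ : Set (Module.Dual ℝ A)) ∨ -c ∈ hull ℝ (Δ : Set (Module.Dual ℝ A)) := by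
  rcases hΔ.2.2 c hc with ⟨n, hn, h⟩ | ⟨n, hn, h⟩
  · exact Or.inl (mem_hull_finset_iff.mpr ⟨n, hn, h⟩)
  · exact Or.inr (mem_hull_finset_iff.mpr ⟨n, hn, by rw [h, neg_neg]⟩)

lemma isBase_congr (h : S.Φ = T.Φ) : S.IsBase Δ ↔ T.IsBase Δ := by
  rw [IsBase, IsBase, h]

lemma refl_apply (a x : Module.Dual ℝ A) : S.refl a x = x - (2 * S.inn x a / S.inn a a) • a :=
  rfl

lemma refl_congr (h : S.inn = T.inn) : S.refl = T.refl := by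
  funext a x
  rw [refl_apply, refl_apply, h]

/-- `z` and `y` lie on the same root hyperplanes `H_a`. -/
def SameWalls (S : RootWeightData A) (z y : Module.Dual ℝ A) : Prop :=
  ∀ a ∈ S.Φ, S.inn z a = 0 ↔ S.inn y a = 0

lemma SameWalls.symm {z y : Module.Dual ℝ A} (h : S.SameWalls z y) : S.SameWalls y z :=
  fun a ha => (h a ha).symm

lemma sameWalls_congr (hΦ : S.Φ = T.Φ) (hinn : S.inn = T.inn) {z y : Module.Dual ℝ A} :
    S.SameWalls z y ↔ T.SameWalls z y := by
  rw [SameWalls, SameWalls, hΦ, hinn]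

end RootWeightData

open RootWeightData

namespace RootWeightSystem

variable (S : RootWeightSystem A) {Δ Δ₁ Δ₂ : Finset (Module.Dual ℝ A)} {a b : Module.Dual ℝ A}

def innₗ (y : Module.Dual ℝ A) : Module.Dual ℝ A →ₗ[ℝ] ℝ where
  toFun x := S.inn x y
  map_add' x z := S.inn_add_left x z y
  map_smul' c x := S.inn_smul_left c x y

lemma inn_sub_left (x z y : Module.Dual ℝ A) : S.inn (x - z) y = S.inn x y - S.inn z y :=
  map_sub (S.innₗ y) x z

lemma inn_sum_smul_left (s : Finset (Module.Dual ℝ A)) (c : Module.Dual ℝ A → ℝ)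
    (y : Module.Dual ℝ A) : S.inn (∑ b ∈ s, c b • b) y = ∑ b ∈ s, c b * S.inn b y := by
  change S.innₗ y _ = _
  rw [map_sum]
  exact Finset.sum_congr rfl fun b _ => S.inn_smul_left _ _ _

def reflₗ (a : Module.Dual ℝ A) : Module.Dual ℝ A →ₗ[ℝ] Module.Dual ℝ A where
  toFun := S.refl a
  map_add' x y := by
    simp only [refl_apply, S.inn_add_left, mul_add, add_div, add_smul]
    abel
  map_smul' c x := by
    simp only [refl_apply, S.inn_smul_left, RingHom.id_apply, smul_sub, smul_smul]
    congr 2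
    ring

lemma coe_reflₗ (a : Module.Dual ℝ A) : ⇑(S.reflₗ a) = S.refl a :=
  rfl

lemma refl_self (ha : a ≠ 0) : S.refl a a = -a := by
  rw [refl_apply, mul_div_assoc, div_self (S.inn_pos a ha).ne', mul_one, two_smul]
  abel

lemma refl_refl (ha : a ≠ 0) (x : Module.Dual ℝ A) : S.refl a (S.refl a x) = x := by
  calc S.refl a (S.refl a x) = S.reflₗ a (x - (2 * S.inn x a / S.inn a a) • a) := rfl
    _ = x := by
      rw [map_sub, map_smul, coe_reflₗ, S.refl_self ha, refl_apply]
      module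

lemma image_image_refl (ha : a ≠ 0) (Δ : Finset (Module.Dual ℝ A)) :
    (Δ.image (S.refl a)).image (S.refl a) = Δ := by
  erw [Finset.image_image]
  rw [show S.refl a ∘ S.refl a = id from funext (S.refl_refl ha), Finset.image_id]

lemma refl_mem_weyl (ha : a ∈ S.Φ) : S.refl a ∈ S.weyl :=
  Submonoid.subset_closure ⟨a, ha, rfl⟩

lemma inn_refl_left (ha : a ∈ S.Φ) (z y : Module.Dual ℝ A) :
    S.inn (S.refl a z) y = S.inn z (S.refl a y) := by
  conv_lhs => rw [← S.refl_refl (S.root_ne_zero a ha) y]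
  exact S.inn_weyl_invariant _ (S.refl_mem_weyl ha) z (S.refl a y)

lemma sameWalls_refl {z y : Module.Dual ℝ A} (h : S.SameWalls z y) (ha : a ∈ S.Φ) :
    S.SameWalls (S.refl a z) (S.refl a y) := fun c hc => by
  rw [S.inn_refl_left ha, S.inn_refl_left ha]
  exact h _ (S.refl_mem a ha c hc)

lemma isBase_image_refl (hΔ : S.IsBase Δ) (ha : a ∈ S.Φ) : S.IsBase (Δ.image (S.refl a)) :=
  S.base_weyl _ (S.refl_mem_weyl ha) Δ hΔ

lemma lam0_image_refl (hΔ : S.IsBase Δ) (ha : a ∈ S.Φ) :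
    S.lam0 (Δ.image (S.refl a)) = S.refl a (S.lam0 Δ) :=
  S.lam0_equivariant _ (S.refl_mem_weyl ha) Δ hΔ

lemma lam0_sub_lam0_image_refl (hΔ : S.IsBase Δ) (ha : a ∈ S.Φ) :
    S.lam0 Δ - S.lam0 (Δ.image (S.refl a)) = (2 * S.inn (S.lam0 Δ) a / S.inn a a) • a := by
  rw [S.lam0_image_refl hΔ ha, refl_apply, sub_sub_cancel]

lemma inn_lam0_nonneg (hΔ : S.IsBase Δ) (ha : a ∈ Δ) : 0 ≤ S.inn (S.lam0 Δ) a := by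
  have haΦ := hΔ.1 ha
  obtain ⟨n, hn, h⟩ :=
    S.lam0_dominates Δ hΔ _ (S.lam0_mem _ (S.isBase_image_refl hΔ haΦ))
  obtain ⟨φ, hφ, -⟩ := hΔ.linearIndepOn.exists_coord a
  have hcoef := congrArg φ h
  rw [S.lam0_sub_lam0_image_refl hΔ haΦ, map_smul, hφ a ha, if_pos rfl, smul_eq_mul, mul_one,
    coord_sum_smul hφ ha] at hcoef
  have := (le_div_iff₀ (S.inn_pos a (S.root_ne_zero a haΦ))).mp (hcoef ▸ hn a ha)
  linarith

lemma inn_nonpos_of_mem_base (hΔ : S.IsBase Δ) (ha : a ∈ Δ) (hb : b ∈ Δ) (hab : a ≠ b) :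
    S.inn a b ≤ 0 := by
  by_contra! hpos
  have haΦ := hΔ.1 ha
  have hk : 0 < 2 * S.inn b a / S.inn a a := by
    rw [S.inn_symm b a]
    exact div_pos (by linarith) (S.inn_pos a (S.root_ne_zero a haΦ))
  obtain ⟨φa, hφa, hφa_nonneg⟩ := hΔ.linearIndepOn.exists_coord a
  obtain ⟨φb, hφb, hφb_nonneg⟩ := hΔ.linearIndepOn.exists_coord b
  rcases hΔ.mem_hull_or_neg_mem_hull (S.refl_mem a haΦ b (hΔ.1 hb)) with h | h
  · have := hφa_nonneg _ h
    simp only [refl_apply, map_sub, map_smul, hφa a ha, hφa b hb, if_neg hab.symm, if_pos,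
      smul_eq_mul] at this
    linarith
  · have := hφb_nonneg _ h
    simp only [refl_apply, map_neg, map_sub, map_smul, hφb a ha, hφb b hb, if_neg hab,
      smul_eq_mul] at this
    norm_num at this

def inversionSet (x : A) (Δ : Finset (Module.Dual ℝ A)) : Finset (Module.Dual ℝ A) :=
  S.Φ.filter fun c => c ∈ hull ℝ (Δ : Set (Module.Dual ℝ A)) ∧ c x < 0

lemma inversionSet_image_refl_ssubset {x : A} (hΔ : S.IsBase Δ) (ha : a ∈ Δ) (hax : a x < 0) :
    S.inversionSet x (Δ.image (S.refl a)) ⊂ S.inversionSet x Δ := by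
  have haΦ := hΔ.1 ha
  have ha0 := S.root_ne_zero a haΦ
  have hrefl : ∀ c ∈ hull ℝ ((Δ.image (S.refl a) : Finset _) : Set (Module.Dual ℝ A)),
      S.refl a c ∈ hull ℝ (Δ : Set (Module.Dual ℝ A)) := fun c hc => by
    have := apply_mem_hull_image (S.reflₗ a) hc
    rwa [coe_reflₗ, S.image_image_refl ha0] at this
  refine (Finset.ssubset_iff_of_subset fun c hc => ?_).2 ⟨a, ?_, fun haI => ?_⟩
  · obtain ⟨hcΦ, hc, hcx⟩ := Finset.mem_filter.mp hc
    refine Finset.mem_filter.mpr ⟨hcΦ, (hΔ.mem_hull_or_neg_mem_hull hcΦ).resolve_right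
      fun hneg => ?_, hcx⟩
    -- `c = r_a d` with `d = r_a c ≥ 0` and `-c ≥ 0` force `d` onto the ray through `a`.
    have hcd : c = S.refl a (S.refl a c) := (S.refl_refl ha0 c).symm
    obtain ⟨s, hs, hds⟩ := exists_eq_smul_of_mem_hull hΔ.linearIndepOn ha (hrefl c hc)
      (by rwa [hcd, refl_apply, neg_sub] at hneg)
    have : c x = -(s * a x) := by
      rw [hcd, hds, ← coe_reflₗ, map_smul, coe_reflₗ, S.refl_self ha0]
      simp
    nlinarith
  · exact Finset.mem_filter.mpr ⟨haΦ, subset_hull (R := ℝ) ha, hax⟩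
  · have hneg := hrefl a (Finset.mem_filter.mp haI).2.1
    rw [S.refl_self ha0] at hneg
    exact ha0 (eq_zero_of_mem_hull_of_neg_mem_hull hΔ.linearIndepOn
      (subset_hull (R := ℝ) ha) hneg)

/-- The walk through simple reflections in roots negative at `x` terminates because each step
shrinks the inversion set. -/
theorem exists_isBase_nonneg_of_invariant (x : A) (P : Finset (Module.Dual ℝ A) → Prop)
    (hP : ∀ Δ, S.IsBase Δ → P Δ → ∀ b ∈ Δ, b x < 0 → P (Δ.image (S.refl b)))
    (hΔ : S.IsBase Δ) (h : P Δ) : ∃ Δ', S.IsBase Δ' ∧ P Δ' ∧ ∀ a ∈ Δ', 0 ≤ a x := by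
  induction hn : (S.inversionSet x Δ).card using Nat.strong_induction_on generalizing Δ with
  | _ n ih =>
    by_cases hneg : ∃ b ∈ Δ, b x < 0
    · obtain ⟨b, hb, hbx⟩ := hneg
      exact ih _ (hn ▸ Finset.card_lt_card (S.inversionSet_image_refl_ssubset hΔ hb hbx))
        (S.isBase_image_refl hΔ (hΔ.1 hb)) (hP Δ hΔ h b hb hbx) rfl
    · push Not at hneg
      exact ⟨Δ, hΔ, h, hneg⟩

lemma lam0_eq_of_subset_hull (h₁ : S.IsBase Δ₁) (h₂ : S.IsBase Δ₂)
    (h : (Δ₂ : Set (Module.Dual ℝ A)) ⊆ hull ℝ (Δ₁ : Set (Module.Dual ℝ A))) :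
    S.lam0 Δ₁ = S.lam0 Δ₂ := by
  obtain ⟨n, hn, h₁₂⟩ := S.lam0_dominates Δ₁ h₁ _ (S.lam0_mem Δ₂ h₂)
  obtain ⟨m, hm, h₂₁⟩ := S.lam0_dominates Δ₂ h₂ _ (S.lam0_mem Δ₁ h₁)
  refine sub_eq_zero.mp (eq_zero_of_mem_hull_of_neg_mem_hull h₁.linearIndepOn
    (mem_hull_finset_iff.mpr ⟨n, hn, h₁₂⟩) ?_)
  rw [neg_sub]
  exact Submodule.span_le.mpr h (mem_hull_finset_iff.mpr ⟨m, hm, h₂₁⟩)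

theorem sameWalls_lam0 {S T : RootWeightSystem A} (hΦ : S.Φ = T.Φ) (hinn : S.inn = T.inn)
    (h₁ : S.IsBase Δ₁) (hwalls : S.SameWalls (S.lam0 Δ₁) (T.lam0 Δ₁)) (h₂ : S.IsBase Δ₂) :
    S.SameWalls (S.lam0 Δ₂) (T.lam0 Δ₂) := by
  obtain ⟨u, hu⟩ := exists_eval_eq_one h₂.linearIndepOn
  obtain ⟨Δ, hΔ, hwallsΔ, huΔ⟩ := S.exists_isBase_nonneg_of_invariant u
    (fun Δ => S.SameWalls (S.lam0 Δ) (T.lam0 Δ)) (fun Δ hΔ h b hb _ => by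
      have hbΦ := hΔ.1 hb
      rw [S.lam0_image_refl hΔ hbΦ, refl_congr hinn,
        T.lam0_image_refl ((isBase_congr hΦ).mp hΔ) (hΦ ▸ hbΦ), ← refl_congr hinn]
      exact S.sameWalls_refl h hbΦ) h₁ hwalls
  -- `Δ` and `Δ₂` have the same positive roots: those positive at `u`.
  have hsub : (Δ₂ : Set (Module.Dual ℝ A)) ⊆ hull ℝ (Δ : Set (Module.Dual ℝ A)) := fun e he =>
    (hΔ.mem_hull_or_neg_mem_hull (h₂.1 he)).resolve_right fun hneg => by
      have := nonneg_of_mem_hull (Module.Dual.eval ℝ A u) huΔ hneg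
      norm_num [hu e he] at this
  rwa [S.lam0_eq_of_subset_hull hΔ h₂ hsub,
    T.lam0_eq_of_subset_hull ((isBase_congr hΦ).mp hΔ) ((isBase_congr hΦ).mp h₂) hsub]
    at hwallsΔ

variable {B : Finset (Module.Dual ℝ A)} {μ : Module.Dual ℝ A}

lemma inn_pos_of_adjacent (hΔ : S.IsBase Δ) (hB : B ⊆ Δ) (ha : a ∈ Δ) (haB : a ∉ B)
    {c : Module.Dual ℝ A → ℝ} (hc : ∀ b ∈ B, 0 < c b) (hμ : S.lam0 Δ - μ = ∑ b ∈ B, c b • b)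
    (hadj : S.inn (S.lam0 Δ) a ≠ 0 ∨ ∃ p ∈ B, S.inn p a ≠ 0) : 0 < S.inn μ a := by
  have hinn_nonpos : ∀ b ∈ B, S.inn b a ≤ 0 := fun b hb =>
    S.inn_nonpos_of_mem_base hΔ (hB hb) ha (ne_of_mem_of_not_mem hb haB)
  have hterm : ∀ b ∈ B, 0 ≤ c b * -S.inn b a := fun b hb =>
    mul_nonneg (hc b hb).le (neg_nonneg.mpr (hinn_nonpos b hb))
  have hexp : S.inn μ a = S.inn (S.lam0 Δ) a + ∑ b ∈ B, c b * -S.inn b a := by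
    rw [← sub_sub_cancel (S.lam0 Δ) μ, hμ, S.inn_sub_left, S.inn_sum_smul_left]
    simp [sub_eq_add_neg]
  rw [hexp]
  have hlam := S.inn_lam0_nonneg hΔ ha
  rcases hadj with h | ⟨p, hp, hpa⟩
  · exact add_pos_of_pos_of_nonneg (lt_of_le_of_ne hlam (Ne.symm h)) (Finset.sum_nonneg hterm)
  · exact add_pos_of_nonneg_of_pos hlam (Finset.sum_pos' hterm ⟨p, hp, mul_pos (hc p hp)
      (neg_pos.mpr (lt_of_le_of_ne (hinn_nonpos p hp) hpa))⟩)

variable {Y : Finset (Module.Dual ℝ A)} {x : A}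

lemma mem_span_of_mem_face (hΔ : S.IsBase Δ) (hx : x ∈ S.Face Δ Y) {l : Module.Dual ℝ A}
    (hl : l ∈ S.Λ) (hlx : (S.lam0 Δ - l) x ≤ 0) :
    S.lam0 Δ - l ∈ Submodule.span ℝ (Y : Set (Module.Dual ℝ A)) := by
  obtain ⟨n, -, h⟩ := S.lam0_dominates Δ hΔ l hl
  exact mem_span_of_supp_subset ⟨n, h⟩ (by_contra fun hsupp => (hx.2 l hl hsupp).not_ge hlx)

theorem subset_span_of_graphConnected (hΔ : S.IsBase Δ) (hx : x ∈ S.Face Δ Y)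
    {Δx : Finset (Module.Dual ℝ A)} (hΔx : S.IsBase Δx)
    (hG : S.lam0 Δ - S.lam0 Δx ∈ Submodule.span ℝ (Y : Set (Module.Dual ℝ A)))
    {Z : Finset (Module.Dual ℝ A)} (hZ : Z ⊆ Δx) (hZx : ∀ a ∈ Z, a x = 0) {v : Module.Dual ℝ A}
    (hconn : GraphConnected S.inn (↑Z ∪ {v}))
    (hv : ∀ a ∈ Z, S.inn v a ≠ 0 → S.inn (S.lam0 Δx) a ≠ 0) :
    (Z : Set (Module.Dual ℝ A)) ⊆ Submodule.span ℝ (Y : Set (Module.Dual ℝ A)) := by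
  refine (hconn.induction_insert
    (fun a ha => (S.inn_pos a (S.root_ne_zero a (hΔx.1 (hZ ha)))).ne')
    (P := fun B => (B : Set (Module.Dual ℝ A)) ⊆ Submodule.span ℝ (Y : Set (Module.Dual ℝ A)) ∧
      ∃ μ ∈ S.Λ, ∃ c : Module.Dual ℝ A → ℝ, (∀ b ∈ B, 0 < c b) ∧
        S.lam0 Δx - μ = ∑ b ∈ B, c b • b)
    ⟨by simp, S.lam0 Δx, S.lam0_mem Δx hΔx, 0, by simp, by simp⟩ ?_).1
  rintro B hBZ a haZ haB ⟨p, hp, hpa⟩ ⟨hBY, μ, hμ, c, hc, hrep⟩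
  have haΦ := hΔx.1 (hZ haZ)
  have hpos : 0 < S.inn μ a := S.inn_pos_of_adjacent hΔx (hBZ.trans hZ) (hZ haZ) haB hc hrep
    (hp.elim (fun hp => Or.inr ⟨p, hp, hpa⟩) fun hpv => Or.inl (hv a haZ (hpv ▸ hpa)))
  set κ := 2 * S.inn μ a / S.inn a a
  have hκ : 0 < κ := div_pos (by linarith) (S.inn_pos a (S.root_ne_zero a haΦ))
  -- the reflected weight `r_a μ = μ - κ a` adds `a` to the support
  have hrep' : S.lam0 Δx - S.refl a μ = κ • a + ∑ b ∈ B, c b • b := by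
    rw [refl_apply, ← hrep]
    abel
  have hspan : S.lam0 Δ - S.refl a μ ∈ Submodule.span ℝ (Y : Set (Module.Dual ℝ A)) := by
    refine S.mem_span_of_mem_face hΔ hx (S.weight_weyl_invariant _ (S.refl_mem_weyl haΦ) μ hμ)
      (le_of_eq ?_)
    rw [← sub_add_sub_cancel _ (S.lam0 Δx), hrep']
    simp [eval_eq_zero_of_mem_span hx.1 hG, hZx a haZ]
    exact Finset.sum_eq_zero fun b hb => by rw [hZx b (hBZ hb), mul_zero]
  have hκa : κ • a ∈ Submodule.span ℝ (Y : Set (Module.Dual ℝ A)) := by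
    have hsum := Submodule.sum_mem _ fun b hb => Submodule.smul_mem _ (c b) (hBY hb)
    have := Submodule.sub_mem _ (Submodule.sub_mem _ hspan hG) hsum
    rwa [sub_sub_sub_cancel_left, hrep', add_sub_cancel_right] at this
  refine ⟨?_, S.refl a μ, S.weight_weyl_invariant _ (S.refl_mem_weyl haΦ) μ hμ,
    Function.update c a κ, fun b hb => ?_, ?_⟩
  · rw [Finset.coe_insert]
    exact Set.insert_subset ((Submodule.smul_mem_iff _ hκ.ne').mp hκa) hBY
  · rcases Finset.mem_insert.mp hb with rfl | hb
    · simpa using hκ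
    · simpa [Function.update_of_ne (ne_of_mem_of_not_mem hb haB)] using hc b hb
  · rw [Finset.sum_insert haB, Function.update_self, hrep']
    congr 1
    exact Finset.sum_congr rfl fun b hb => by
      rw [Function.update_of_ne (ne_of_mem_of_not_mem hb haB)]

end RootWeightSystem

section Faces

open RootWeightSystem

variable {S T : RootWeightSystem A} {Δ Y : Finset (Module.Dual ℝ A)} {x : A}

lemma lam0_sub_lam0_image_refl_mem_span (hΦ : S.Φ = T.Φ) (hinn : S.inn = T.inn)
    (hΔ : S.IsBase Δ) (hx : x ∈ S.Face Δ Y) {Δa : Finset (Module.Dual ℝ A)} (hΔa : S.IsBase Δa)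
    (hwalls : S.SameWalls (S.lam0 Δa) (T.lam0 Δa)) {b : Module.Dual ℝ A} (hb : b ∈ Δa)
    (hbx : b x < 0)
    (hS : S.lam0 Δ - S.lam0 Δa ∈ Submodule.span ℝ (Y : Set (Module.Dual ℝ A)))
    (hT : T.lam0 Δ - T.lam0 Δa ∈ Submodule.span ℝ (Y : Set (Module.Dual ℝ A))) :
    S.lam0 Δ - S.lam0 (Δa.image (S.refl b)) ∈ Submodule.span ℝ (Y : Set (Module.Dual ℝ A)) ∧
      T.lam0 Δ - T.lam0 (Δa.image (S.refl b)) ∈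
        Submodule.span ℝ (Y : Set (Module.Dual ℝ A)) := by
  have hbΦ := hΔa.1 hb
  have hstepS := S.lam0_sub_lam0_image_refl hΔa hbΦ
  have hstepT : T.lam0 Δa - T.lam0 (Δa.image (S.refl b)) =
      (2 * S.inn (T.lam0 Δa) b / S.inn b b) • b := by
    rw [refl_congr hinn, hinn]
    exact T.lam0_sub_lam0_image_refl ((isBase_congr hΦ).mp hΔa) (hΦ ▸ hbΦ)
  rw [← sub_add_sub_cancel (S.lam0 Δ) (S.lam0 Δa), hstepS,
    ← sub_add_sub_cancel (T.lam0 Δ) (T.lam0 Δa), hstepT]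
  by_cases h0 : S.inn (S.lam0 Δa) b = 0
  · rw [h0, (hwalls b hbΦ).mp h0]
    simpa using ⟨hS, hT⟩
  set κ := 2 * S.inn (S.lam0 Δa) b / S.inn b b
  have hκ : 0 < κ := div_pos (by linarith [lt_of_le_of_ne (S.inn_lam0_nonneg hΔa hb) (Ne.symm h0)])
    (S.inn_pos b (S.root_ne_zero b hbΦ))
  have hS' : S.lam0 Δ - S.lam0 Δa + κ • b ∈ Submodule.span ℝ (Y : Set (Module.Dual ℝ A)) := by
    rw [← hstepS, sub_add_sub_cancel]
    refine S.mem_span_of_mem_face hΔ hx (S.lam0_mem _ (S.isBase_image_refl hΔa hbΦ)) ?_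
    rw [← sub_add_sub_cancel _ (S.lam0 Δa), hstepS]
    simp [eval_eq_zero_of_mem_span hx.1 hS]
    nlinarith
  have hb' : b ∈ Submodule.span ℝ (Y : Set (Module.Dual ℝ A)) :=
    (Submodule.smul_mem_iff _ hκ.ne').mp (by simpa using Submodule.sub_mem _ hS' hS)
  exact ⟨hS', Submodule.add_mem _ hT (Submodule.smul_mem _ _ hb')⟩

theorem face_subset_face (hΦ : S.Φ = T.Φ) (hinn : S.inn = T.inn)
    (hwalls : ∀ Δ₁, S.IsBase Δ₁ → S.SameWalls (S.lam0 Δ₁) (T.lam0 Δ₁))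
    (hΔ : S.IsBase Δ) (hYΔ : Y ⊆ Δ) : S.Face Δ Y ⊆ T.Face Δ Y := by
  intro x hx
  obtain ⟨Δx, hΔx, ⟨hGS, hGT⟩, hxΔx⟩ := S.exists_isBase_nonneg_of_invariant x
    (fun Δ₁ => S.lam0 Δ - S.lam0 Δ₁ ∈ Submodule.span ℝ (Y : Set (Module.Dual ℝ A)) ∧
      T.lam0 Δ - T.lam0 Δ₁ ∈ Submodule.span ℝ (Y : Set (Module.Dual ℝ A)))
    (fun Δa hΔa h b hb hbx => lam0_sub_lam0_image_refl_mem_span hΦ hinn hΔ hx hΔa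
      (hwalls Δa hΔa) hb hbx h.1 h.2) hΔ (by simp)
  have hTΔx := (isBase_congr hΦ).mp hΔx
  refine ⟨hx.1, fun l hl hsupp => lt_of_not_ge fun hlx =>
    hsupp (supp_subset_of_mem_span hΔ.linearIndepOn hYΔ ?_)⟩
  obtain ⟨m, hm, hrep⟩ := T.lam0_dominates Δx hTΔx l hl
  have hZx := eval_eq_zero_of_mem_supp hΔx.linearIndepOn hm hrep hxΔx (by
    have := eval_eq_zero_of_mem_span hx.1 hGT
    simp only [LinearMap.sub_apply] at this hlx ⊢
    linarith)
  have hconn := ((T.admissible_iff_support Δx hTΔx _ (Finset.filter_subset _ _)).mpr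
    ⟨l, hl, rfl⟩).2
  rw [← hinn] at hconn
  have hZ := S.subset_span_of_graphConnected hΔ hx hΔx hGS (Finset.filter_subset _ _) hZx hconn
    fun a ha => mt ((hwalls Δx hΔx) a (hΔx.1 (Finset.filter_subset _ _ ha))).mp
  rw [← sub_add_sub_cancel _ (T.lam0 Δx)]
  exact Submodule.add_mem _ hGT
    (Submodule.span_le.mpr hZ (mem_span_of_supp_subset ⟨m, hrep⟩ le_rfl))

end Faces

/-- Suppose the highest weights of `ρ` and `σ` lie in the same
face of the hyperplane arrangement `{H_a}_{a ∈ Φ}` of `A*` (i.e. have the same sign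
pattern against all roots).  Then for bases `Δ`, `Δ'` and admissible subsets
`Y ⊆ Δ`, `Y' ⊆ Δ'`, one has `F_Y^Δ(ρ) = F_{Y'}^{Δ'}(ρ)` iff
`F_Y^Δ(σ) = F_{Y'}^{Δ'}(σ)`. -/
theorem face_eq_iff_face_eq_of_same_face (S T : RootWeightSystem A)
    (hΦ : S.Φ = T.Φ) (hinn : S.inn = T.inn)
    (Δref : Finset (Module.Dual ℝ A)) (hΔref : S.toRootWeightData.IsBase Δref)
    (hsame : ∀ a ∈ S.Φ, (0 < S.inn (S.lam0 Δref) a ↔ 0 < S.inn (T.lam0 Δref) a) ∧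
      (S.inn (S.lam0 Δref) a = 0 ↔ S.inn (T.lam0 Δref) a = 0))
    (Δ Δ' Y Y' : Finset (Module.Dual ℝ A))
    (hΔ : S.toRootWeightData.IsBase Δ) (hΔ' : S.toRootWeightData.IsBase Δ')
    (hY : S.toRootWeightData.Admissible Δ Y)
    (hY' : S.toRootWeightData.Admissible Δ' Y') :
    S.Face Δ Y = S.Face Δ' Y' ↔ T.Face Δ Y = T.Face Δ' Y' := by
  have hwalls : ∀ Δ₁, S.IsBase Δ₁ → S.SameWalls (S.lam0 Δ₁) (T.lam0 Δ₁) := fun _ =>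
    RootWeightSystem.sameWalls_lam0 hΦ hinn hΔref fun a ha => (hsame a ha).2
  have hwalls' : ∀ Δ₁, T.IsBase Δ₁ → T.SameWalls (T.lam0 Δ₁) (S.lam0 Δ₁) := fun Δ₁ h =>
    (sameWalls_congr hΦ hinn).mp (hwalls Δ₁ ((isBase_congr hΦ).mpr h)).symm
  have hface : ∀ {Δ₁ Y₁}, S.IsBase Δ₁ → Y₁ ⊆ Δ₁ → S.Face Δ₁ Y₁ = T.Face Δ₁ Y₁ := fun h hY =>
    (face_subset_face hΦ hinn hwalls h hY).antisymm
      (face_subset_face hΦ.symm hinn.symm hwalls' ((isBase_congr hΦ).mp h) hY)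
  rw [hface hΔ hY.1, hface hΔ' hY'.1]
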